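/- Let g be a solution of the Ricci flow on Ω × [0,T) and let ε, δ > 0. At every point of Ω × (0,T) where K := R + ε/(2(t+δ)) > 0, the curvature of the space-time metric g̃_{ε,δ} satisfies: (1) R̃^l_{ijk} = R^l_{ijk} − (R^l_i R_{jk} − R^l_j R_{ik})/K for 1 ≤ i,j,k,l ≤ n; (2) R̃^l_{0jk} = −∇_k R^l_j + ∇^l R_{jk} − ½ (R_{jk} ∇^l R − R^l_j ∂_k R)/K for 1 ≤ j,k,l ≤ n; (3) R̃^l_{i00} = ∂R^l_i/∂t − ½ ∇_i∇^l R − R^m_i R^l_m − [ ( ½ ∂R/∂t − ε/(4(t+δ)²) ) R^l_i − ¼ ∂_i R ∇^l R ]/K for 1 ≤ i,l ≤ n, where ∇^l = g^{lm}∇_m and R^l_i = g^{lm}R_{im}. -/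

import Mathlib

/- Common local-coordinate framework for the Chow–Chu space-time
   interpretation of Hamilton's Harnack inequality for the Ricci flow. -/

noncomputable section
open scoped BigOperators
open Filter

namespace CC

/-- A time-dependent scalar field on `ℝⁿ × ℝ` (space variable first, then time). -/
abbrev Fld (n : ℕ) := (Fin n → ℝ) → ℝ → ℝ

/-- A time-dependent 2-tensor field (e.g. a metric) in local coordinates. -/
abbrev Met (n : ℕ) := Fin n → Fin n → Fld n

variable {n : ℕ}

/-- Spatial partial derivative `∂ᵢ` of a time-dependent scalar field. -/
def spd (i : Fin n) (u : Fld n) : Fld n :=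
  fun x t => fderiv ℝ (fun y => u y t) x (Pi.single i 1)

/-- Time partial derivative `∂/∂t` of a time-dependent scalar field. -/
def tpd (u : Fld n) : Fld n :=
  fun x t => deriv (fun s => u x s) t

/-- Christoffel symbols `Γ^k_{ij} = ½ g^{kl}(∂ᵢ g_{jl} + ∂ⱼ g_{il} − ∂ₗ g_{ij})`. -/
def Gamma (g ginv : Met n) (k i j : Fin n) : Fld n :=
  fun x t => (1/2) * ∑ l, ginv k l x t *
    (spd i (g j l) x t + spd j (g i l) x t - spd l (g i j) x t)

/-- Riemann curvature `R^l_{ijk} = ∂ᵢΓ^l_{jk} − ∂ⱼΓ^l_{ik} + Γ^m_{jk}Γ^l_{im} − Γ^m_{ik}Γ^l_{jm}`. -/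
def Riem (g ginv : Met n) (l i j k : Fin n) : Fld n :=
  fun x t => spd i (Gamma g ginv l j k) x t - spd j (Gamma g ginv l i k) x t
    + ∑ m, (Gamma g ginv m j k x t * Gamma g ginv l i m x t
          - Gamma g ginv m i k x t * Gamma g ginv l j m x t)

/-- Ricci curvature `R_{jk} = R^p_{pjk}`. -/
def Ric (g ginv : Met n) (j k : Fin n) : Fld n :=
  fun x t => ∑ p, Riem g ginv p p j k x t

/-- Scalar curvature `R = g^{jk} R_{jk}`. -/
def Scal (g ginv : Met n) : Fld n :=
  fun x t => ∑ j, ∑ k, ginv j k x t * Ric g ginv j k x t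

/-- Ricci curvature with raised index, `R^k_i = g^{km} R_{im}`. -/
def RicUp (g ginv : Met n) (k i : Fin n) : Fld n :=
  fun x t => ∑ m, ginv k m x t * Ric g ginv i m x t

/-- Fully lowered Riemann tensor `R_{ijkl} = g_{lm} R^m_{ijk}`. -/
def RiemLow (g ginv : Met n) (i j k l : Fin n) : Fld n :=
  fun x t => ∑ m, g l m x t * Riem g ginv m i j k x t

/-- Covariant derivative of a 1-form: `∇ᵢω_j = ∂ᵢω_j − Γ^p_{ij} ω_p`. -/
def cd1 (g ginv : Met n) (i : Fin n) (ω : Fin n → Fld n) (j : Fin n) : Fld n :=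
  fun x t => spd i (ω j) x t - ∑ p, Gamma g ginv p i j x t * ω p x t

/-- Covariant derivative of a (0,2)-tensor. -/
def cd2 (g ginv : Met n) (i : Fin n) (A : Fin n → Fin n → Fld n) (j k : Fin n) : Fld n :=
  fun x t => spd i (A j k) x t - ∑ p, Gamma g ginv p i j x t * A p k x t
    - ∑ p, Gamma g ginv p i k x t * A j p x t

/-- Covariant derivative of a (1,1)-tensor `T^l_j`:
`∇_a T^l_j = ∂_a T^l_j + Γ^l_{ap} T^p_j − Γ^p_{aj} T^l_p`. -/
def cd11 (g ginv : Met n) (a : Fin n) (T : Fin n → Fin n → Fld n) (l j : Fin n) : Fld n :=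
  fun x t => spd a (T l j) x t + ∑ p, Gamma g ginv l a p x t * T p j x t
    - ∑ p, Gamma g ginv p a j x t * T l p x t

/-- Covariant derivative of a vector field: `∇ᵢV^l = ∂ᵢV^l + Γ^l_{ip} V^p`. -/
def cdVec (g ginv : Met n) (i : Fin n) (V : Fin n → Fld n) (l : Fin n) : Fld n :=
  fun x t => spd i (V l) x t + ∑ p, Gamma g ginv l i p x t * V p x t

/-- Hessian of a scalar: `∇ᵢ∇ⱼu = ∂ᵢ∂ⱼu − Γ^p_{ij}∂_p u`. -/
def hess (g ginv : Met n) (u : Fld n) (i j : Fin n) : Fld n :=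
  fun x t => spd i (spd j u) x t - ∑ p, Gamma g ginv p i j x t * spd p u x t

/-- Gradient (raised differential) of the scalar curvature: `∇^l R = g^{lm}∂_m R`. -/
def gradScal (g ginv : Met n) (l : Fin n) : Fld n :=
  fun x t => ∑ m, ginv l m x t * spd m (Scal g ginv) x t

/-- Rough Laplacian `Δ = g^{pq}∇_p∇_q` on 1-forms. -/
def lap1 (g ginv : Met n) (V : Fin n → Fld n) (j : Fin n) : Fld n :=
  fun x t => ∑ p, ∑ q, ginv p q x t *
    (spd p (cd1 g ginv q V j) x t
     - ∑ m, Gamma g ginv m p q x t * cd1 g ginv m V j x t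
     - ∑ m, Gamma g ginv m p j x t * cd1 g ginv q V m x t)

/-- Rough Laplacian `Δ = g^{pq}∇_p∇_q` on (0,2)-tensors. -/
def lap02 (g ginv : Met n) (A : Fin n → Fin n → Fld n) (i j : Fin n) : Fld n :=
  fun x t => ∑ p, ∑ q, ginv p q x t *
    (spd p (cd2 g ginv q A i j) x t
     - ∑ m, Gamma g ginv m p q x t * cd2 g ginv m A i j x t
     - ∑ m, Gamma g ginv m p i x t * cd2 g ginv q A m j x t
     - ∑ m, Gamma g ginv m p j x t * cd2 g ginv q A i m x t)

/-- Rough Laplacian `Δ = g^{pq}∇_p∇_q` on (1,1)-tensors. -/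
def lap11 (g ginv : Met n) (T : Fin n → Fin n → Fld n) (l i : Fin n) : Fld n :=
  fun x t => ∑ p, ∑ q, ginv p q x t *
    (spd p (cd11 g ginv q T l i) x t
     + ∑ m, Gamma g ginv l p m x t * cd11 g ginv q T m i x t
     - ∑ m, Gamma g ginv m p q x t * cd11 g ginv m T l i x t
     - ∑ m, Gamma g ginv m p i x t * cd11 g ginv q T l m x t)

/-- Laplacian of the scalar curvature `ΔR = g^{ij}(∂ᵢ∂ⱼR − Γ^p_{ij}∂_pR)`. -/
def lapScal (g ginv : Met n) : Fld n :=
  fun x t => ∑ i, ∑ j, ginv i j x t * hess g ginv (Scal g ginv) i j x t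

/-- Squared norm of the Ricci tensor `|Ric|² = g^{ik}g^{jl}R_{ij}R_{kl}`. -/
def normRicSq (g ginv : Met n) : Fld n :=
  fun x t => ∑ i, ∑ j, ∑ k, ∑ l,
    ginv i k x t * ginv j l x t * Ric g ginv i j x t * Ric g ginv k l x t

/-- Hamilton's tensor `P_{ijk} = ∇ᵢR_{jk} − ∇ⱼR_{ik}`. -/
def Pt (g ginv : Met n) (i j k : Fin n) : Fld n :=
  fun x t => cd2 g ginv i (Ric g ginv) j k x t - cd2 g ginv j (Ric g ginv) i k x t

/-- Hamilton's tensor `M_{ij} = ΔR_{ij} − ½∇ᵢ∇ⱼR + 2R_{kijl}R_{kl} − R_{ik}R_{kj}`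
(repeated lower indices contracted with `g^{··}`). -/
def Mt (g ginv : Met n) (i j : Fin n) : Fld n :=
  fun x t => lap02 g ginv (Ric g ginv) i j x t
    - (1/2) * hess g ginv (Scal g ginv) i j x t
    + 2 * ∑ k, ∑ l, ∑ a, ∑ b, ginv k a x t * ginv l b x t *
        RiemLow g ginv k i j l x t * Ric g ginv a b x t
    - ∑ k, ∑ a, ginv k a x t * Ric g ginv i k x t * Ric g ginv a j x t

/-- Hamilton's Harnack quadratic
`Z(U,W) = M_{ij}W_iW_j − 2P_{ijk}U_{ij}W_k + R_{ijkl}U_{ij}U_{lk}`,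
repeated lower indices being contracted with `g^{··}`. -/
def Zharnack (g ginv : Met n) (U : Fin n → Fin n → ℝ) (W : Fin n → ℝ) : Fld n :=
  fun x t =>
    (∑ i, ∑ j, ∑ p, ∑ q, ginv i p x t * ginv j q x t * Mt g ginv i j x t * W p * W q)
    - 2 * (∑ i, ∑ j, ∑ k, ∑ p, ∑ q, ∑ r,
        ginv i p x t * ginv j q x t * ginv k r x t * Pt g ginv i j k x t * U p q * W r)
    + (∑ i, ∑ j, ∑ k, ∑ l, ∑ p, ∑ q, ∑ r, ∑ s,
        ginv i p x t * ginv j q x t * ginv k r x t * ginv l s x t *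
          RiemLow g ginv i j k l x t * U p q * U s r)

/-- `g` (with pointwise inverse `ginv`) is a smooth solution of the Ricci flow
`∂g_{ij}/∂t = −2R_{ij}` on `Ω × [0,T)`. -/
def RicciFlow (Ωs : Set (Fin n → ℝ)) (T : ℝ) (g ginv : Met n) : Prop :=
  IsOpen Ωs ∧ IsConnected Ωs ∧ 0 < T ∧
  (∀ i j, ContDiffOn ℝ (⊤ : ℕ∞) (fun p : (Fin n → ℝ) × ℝ => g i j p.1 p.2)
      (Ωs ×ˢ Set.Ico 0 T)) ∧
  (∀ x ∈ Ωs, ∀ t ∈ Set.Ico (0:ℝ) T,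
    (∀ i j, g i j x t = g j i x t) ∧
    (∀ v : Fin n → ℝ, v ≠ 0 → 0 < ∑ i, ∑ j, g i j x t * v i * v j) ∧
    (∀ i j, ∑ k, g i k x t * ginv k j x t = (if i = j then (1:ℝ) else 0)) ∧
    (∀ i j, tpd (g i j) x t = -2 * Ric g ginv i j x t))

/-! ### Space-time objects -/

/-- A space-time connection on `M̃ = Ω × [0,T)`: the index `0` is time,
the index `i.succ` is the spatial direction `i`. -/
abbrev Con (n : ℕ) := Fin (n+1) → Fin (n+1) → Fin (n+1) → Fld n

/-- Space-time partial derivative: `∂₀ = ∂/∂t` and `∂_{i.succ} = ∂ᵢ`. -/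
def spdT (i : Fin (n+1)) (u : Fld n) : Fld n :=
  Fin.cases (tpd u) (fun j => spd j u) i

/-- Curvature of a space-time connection:
`R̃^l_{ijk} = ∂ᵢΓ̃^l_{jk} − ∂ⱼΓ̃^l_{ik} + Σ_m (Γ̃^m_{jk}Γ̃^l_{im} − Γ̃^m_{ik}Γ̃^l_{jm})`. -/
def RiemT (Γ : Con n) (l i j k : Fin (n+1)) : Fld n :=
  fun x t => spdT i (Γ l j k) x t - spdT j (Γ l i k) x t
    + ∑ m : Fin (n+1), (Γ m j k x t * Γ l i m x t - Γ m i k x t * Γ l j m x t)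

/-- Ricci tensor of a space-time connection: `R̃_{jk} = Σ_p R̃^p_{pjk}`. -/
def RicT (Γ : Con n) (j k : Fin (n+1)) : Fld n :=
  fun x t => ∑ p : Fin (n+1), RiemT Γ p p j k x t

/-- Space-time covariant derivative of a (0,2)-tensor with respect to a connection. -/
def cdT2 (Γ : Con n) (a : Fin (n+1)) (A : Fin (n+1) → Fin (n+1) → Fld n)
    (b c : Fin (n+1)) : Fld n :=
  fun x t => spdT a (A b c) x t - ∑ p : Fin (n+1), Γ p a b x t * A p c x t
    - ∑ p : Fin (n+1), Γ p a c x t * A b p x t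

/-- Space-time covariant derivative of a (1,1)-tensor with respect to a connection. -/
def cdT11 (Γ : Con n) (a : Fin (n+1)) (T : Fin (n+1) → Fin (n+1) → Fld n)
    (l j : Fin (n+1)) : Fld n :=
  fun x t => spdT a (T l j) x t + ∑ p : Fin (n+1), Γ l a p x t * T p j x t
    - ∑ p : Fin (n+1), Γ p a j x t * T l p x t

/-- Time shift of a field by `τ`. -/
def shift (τ : ℝ) (u : Fld n) : Fld n := fun x t => u x (t + τ)

/-- The degenerate inverse metric on space-time (no time shift):
`g̃^{ij} = g^{ij}` for spatial `i,j` and `g̃^{ij} = 0` if `i = 0` or `j = 0`. -/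
def gdegM (ginv : Met n) (i j : Fin (n+1)) : Fld n :=
  Fin.cases (fun _ _ => (0:ℝ))
    (fun i' => Fin.cases (fun _ _ => (0:ℝ)) (fun j' => ginv i' j') j) i

/-- The degenerate inverse metric `g̃_τ` on `M̃_τ`, shifted in time by `τ`. -/
def gdeg (ginv : Met n) (τ : ℝ) (i j : Fin (n+1)) : Fld n :=
  shift τ (gdegM ginv i j)

/-- The Chow–Chu connection `Γ̃_τ` on space-time, defined by (A1)–(A4)
(with time shift `τ`). -/
def GammaA (g ginv : Met n) (τ : ℝ) : Con n :=
  fun k i j =>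
    Fin.cases (fun _ _ => (0:ℝ))
      (fun k' =>
        Fin.cases
          (Fin.cases
            (shift τ (fun x t => -(1/2) * ∑ m, ginv k' m x t * spd m (Scal g ginv) x t))
            (fun j' => shift τ (fun x t => -(RicUp g ginv k' j' x t))) j)
          (fun i' =>
            Fin.cases (shift τ (fun x t => -(RicUp g ginv k' i' x t)))
              (fun j' => shift τ (Gamma g ginv k' i' j')) j) i) k

/-! ### The modified flow -/

/-- `∇ᵢ∇^k f = g^{km} ∇ᵢ∇ₘ f`. -/
def hessUp (g ginv : Met n) (f : Fld n) (i k : Fin n) : Fld n :=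
  fun x t => ∑ m, ginv k m x t * hess g ginv f i m x t

/-- `∇^p f = g^{pq} ∂_q f`. -/
def gradf (ginv : Met n) (f : Fld n) (p : Fin n) : Fld n :=
  fun x t => ∑ q, ginv p q x t * spd q f x t

/-- The potential `−½R + ∂f/∂t − ½|∇f|²`. -/
def Fpot (g ginv : Met n) (f : Fld n) : Fld n :=
  fun x t => -(1/2) * Scal g ginv x t + tpd f x t
    - (1/2) * ∑ p, ∑ q, ginv p q x t * spd p f x t * spd q f x t

/-- The space-time connection `Γ̃` of the modified flow, defined by (D1)–(D4). -/
def GammaD (g ginv : Met n) (f : Fld n) : Con n :=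
  fun k i j =>
    Fin.cases (fun _ _ => (0:ℝ))
      (fun k' =>
        Fin.cases
          (Fin.cases
            (fun x t => ∑ l, ginv k' l x t * spd l (Fpot g ginv f) x t)
            (fun j' => fun x t => -(RicUp g ginv k' j' x t) + hessUp g ginv f j' k' x t) j)
          (fun i' =>
            Fin.cases
              (fun x t => -(RicUp g ginv k' i' x t) + hessUp g ginv f i' k' x t)
              (fun j' => Gamma g ginv k' i' j') j) i) k

/-- Space-time Hessian `∇̃_a∇̃_b f = ∂_a∂_b f − Σ_p Γ̃^p_{ab} ∂_p f` (with `∂₀ = ∂/∂t`). -/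
def hessT (Γ : Con n) (f : Fld n) (a b : Fin (n+1)) : Fld n :=
  fun x t => spdT a (spdT b f) x t - ∑ p : Fin (n+1), Γ p a b x t * spdT p f x t

/-- Space-time Ricci tensor with first index raised by the degenerate metric:
`R̃^k_i = Σ_{p=1}^n g^{kp} R̃_{pi}` for spatial `k`, and `R̃^0_i = 0`. -/
def ricTup (ginv : Met n) (Γ : Con n) (k i : Fin (n+1)) : Fld n :=
  Fin.cases (fun _ _ => (0:ℝ))
    (fun k' => fun x t => ∑ p, ginv k' p x t * RicT Γ p.succ i x t) k

/-- `g` is a smooth solution of the modified Ricci flow with potential `f`: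
`∂g_{ij}/∂t = −2R_{ij} + 2∇ᵢ∇ⱼf` on `Ω × [0,T)`. -/
def ModifiedRicciFlow (Ωs : Set (Fin n → ℝ)) (T : ℝ) (g ginv : Met n) (f : Fld n) : Prop :=
  IsOpen Ωs ∧ IsConnected Ωs ∧ 0 < T ∧
  (∀ i j, ContDiffOn ℝ (⊤ : ℕ∞) (fun p : (Fin n → ℝ) × ℝ => g i j p.1 p.2)
      (Ωs ×ˢ Set.Ico 0 T)) ∧
  ContDiffOn ℝ (⊤ : ℕ∞) (fun p : (Fin n → ℝ) × ℝ => f p.1 p.2) (Ωs ×ˢ Set.Ico 0 T) ∧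
  (∀ x ∈ Ωs, ∀ t ∈ Set.Ico (0:ℝ) T,
    (∀ i j, g i j x t = g j i x t) ∧
    (∀ v : Fin n → ℝ, v ≠ 0 → 0 < ∑ i, ∑ j, g i j x t * v i * v j) ∧
    (∀ i j, ∑ k, g i k x t * ginv k j x t = (if i = j then (1:ℝ) else 0)) ∧
    (∀ i j, tpd (g i j) x t = -2 * Ric g ginv i j x t + 2 * hess g ginv f i j x t))

/-! ### The approximating metrics `g̃_{ε,δ}` -/

/-- The space-time metric `g̃_{ε,δ}`: spatial part `g`, `g̃_{00} = R + ε/(2(t+δ))`,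
mixed components zero. -/
def gE (g ginv : Met n) (ε δ : ℝ) (i j : Fin (n+1)) : Fld n :=
  Fin.cases
    (Fin.cases (fun x t => Scal g ginv x t + ε / (2 * (t + δ)))
      (fun _ => fun _ _ => (0:ℝ)) j)
    (fun i' => Fin.cases (fun _ _ => (0:ℝ)) (fun j' => g i' j') j) i

/-- The (block-diagonal) inverse of `g̃_{ε,δ}`. -/
def gEinv (g ginv : Met n) (ε δ : ℝ) (i j : Fin (n+1)) : Fld n :=
  Fin.cases
    (Fin.cases (fun x t => (Scal g ginv x t + ε / (2 * (t + δ)))⁻¹)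
      (fun _ => fun _ _ => (0:ℝ)) j)
    (fun i' => Fin.cases (fun _ _ => (0:ℝ)) (fun j' => ginv i' j') j) i

/-- The Levi-Civita Christoffel symbols of `g̃_{ε,δ}`:
`Γ̃^k_{ij} = ½ g̃^{kl}(∂ᵢg̃_{jl} + ∂ⱼg̃_{il} − ∂ₗg̃_{ij})`, indices in `0,…,n`. -/
def GammaE (g ginv : Met n) (ε δ : ℝ) : Con n :=
  fun k i j => fun x t => (1/2) * ∑ l : Fin (n+1), gEinv g ginv ε δ k l x t *
    (spdT i (gE g ginv ε δ j l) x t + spdT j (gE g ginv ε δ i l) x t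
      - spdT l (gE g ginv ε δ i j) x t)

end CC

/-!
The metric `g̃` is block diagonal, so its Christoffel symbols can be read off directly. Writing
`K = R + ε/(2(t+δ))` and using the Ricci flow equation `∂ₜg = -2 Ric`, they are
`Γ̃^l_{ij} = Γ^l_{ij}`, `Γ̃^l_{0j} = Γ̃^l_{j0} = -R^l_j`, `Γ̃^l_{00} = -½∇^l R`,
`Γ̃^0_{ij} = R_{ij}/K`, `Γ̃^0_{0j} = Γ̃^0_{j0} = ∂_j R/(2K)` and `Γ̃^0_{00} = ∂ₜK/(2K)`.
Substituting them into the curvature formula gives (1) at once. (2) also needs the evolution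
`∂ₜΓ^l_{jk} = -∇_j R^l_k - ∇_k R^l_j + ∇^l R_{jk}`, which comes from `∂ₜg^{lm} = 2R^{lm}`,
from commuting `∂ₜ` with `∂_j` (Clairaut), and from `∇g = 0`, which lets `∇` commute with
raising an index. (3) also needs `∂ₜK = ∂ₜR - ε/(2(t+δ)²)`.
-/

lemma eq_neg_mul_mul_of_mul_add_mul_eq_zero {R : Type*} [Ring R] {G H dG dH : R}
    (hHG : H * G = 1) (h : dG * H + G * dH = 0) : dH = -(H * dG * H) :=
  calc dH = H * (G * dH) := by rw [← mul_assoc, hHG, one_mul]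
    _ = -(H * dG * H) := by rw [eq_neg_of_add_eq_zero_right h, mul_neg, mul_assoc]

lemma hasDerivAt_div_two_mul_add (ε : ℝ) {δ t : ℝ} (htδ : t + δ ≠ 0) :
    HasDerivAt (fun s => ε / (2 * (s + δ))) (-(ε / (2 * (t + δ) ^ 2))) t := by
  have hd : HasDerivAt (fun s => 2 * (s + δ)) 2 t := by
    simpa using ((hasDerivAt_id t).add_const δ).const_mul 2
  refine ((hasDerivAt_const t ε).div hd (mul_ne_zero two_ne_zero htδ)).congr_deriv ?_
  field_simp
  ring

namespace CC

variable {n : ℕ}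

def matrixAt (A : Met n) (x : Fin n → ℝ) (t : ℝ) : Matrix (Fin n) (Fin n) ℝ :=
  Matrix.of fun i j => A i j x t

section Calculus

variable {u v : Fld n} {x : Fin n → ℝ} {t : ℝ}

lemma spd_const (c : ℝ) (i : Fin n) : spd i (fun _ _ => c) x t = 0 := by
  simp [spd]

lemma tpd_const (c : ℝ) : tpd (fun _ _ => c) x t = 0 := by
  simp [tpd]

lemma spd_const_mul (c : ℝ) (i : Fin n) :
    spd i (fun x t => c * u x t) x t = c * spd i u x t := by
  change fderiv ℝ (c • fun y => u y t) x _ = _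
  rw [fderiv_const_smul_field]
  rfl

lemma tpd_const_mul (c : ℝ) : tpd (fun x t => c * u x t) x t = c * tpd u x t :=
  deriv_const_mul_field c

lemma spd_neg (i : Fin n) : spd i (fun x t => -u x t) x t = -spd i u x t := by
  simp [spd, fderiv_fun_neg]

lemma tpd_neg : tpd (fun x t => -u x t) x t = -tpd u x t :=
  deriv.fun_neg

lemma spd_add_fun_time (φ : ℝ → ℝ) (i : Fin n) :
    spd i (fun x t => u x t + φ t) x t = spd i u x t := by
  simp only [spd, fderiv_add_const]

lemma spd_sum {ι : Type*} {s : Finset ι} {f : ι → Fld n} (i : Fin n)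
    (h : ∀ m ∈ s, DifferentiableAt ℝ (fun y => f m y t) x) :
    spd i (fun x t => ∑ m ∈ s, f m x t) x t = ∑ m ∈ s, spd i (f m) x t := by
  simp only [spd, fderiv_fun_sum h, FunLike.coe_sum, Finset.sum_apply]

lemma tpd_sum {ι : Type*} {s : Finset ι} {f : ι → Fld n}
    (h : ∀ m ∈ s, DifferentiableAt ℝ (fun s => f m x s) t) :
    tpd (fun x t => ∑ m ∈ s, f m x t) x t = ∑ m ∈ s, tpd (f m) x t :=
  deriv_fun_sum h

lemma spd_mul (i : Fin n) (hu : DifferentiableAt ℝ (fun y => u y t) x)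
    (hv : DifferentiableAt ℝ (fun y => v y t) x) :
    spd i (fun x t => u x t * v x t) x t = spd i u x t * v x t + u x t * spd i v x t := by
  simp only [spd, fderiv_fun_mul hu hv, add_apply, smul_apply, smul_eq_mul]
  ring

lemma tpd_add (hu : DifferentiableAt ℝ (fun s => u x s) t)
    (hv : DifferentiableAt ℝ (fun s => v x s) t) :
    tpd (fun x t => u x t + v x t) x t = tpd u x t + tpd v x t :=
  deriv_fun_add hu hv

lemma tpd_sub (hu : DifferentiableAt ℝ (fun s => u x s) t)
    (hv : DifferentiableAt ℝ (fun s => v x s) t) :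
    tpd (fun x t => u x t - v x t) x t = tpd u x t - tpd v x t :=
  deriv_fun_sub hu hv

lemma tpd_mul (hu : DifferentiableAt ℝ (fun s => u x s) t)
    (hv : DifferentiableAt ℝ (fun s => v x s) t) :
    tpd (fun x t => u x t * v x t) x t = tpd u x t * v x t + u x t * tpd v x t :=
  deriv_fun_mul hu hv

end Calculus

section Smooth

variable {U : Set ((Fin n → ℝ) × ℝ)} {u v : Fld n} {x : Fin n → ℝ} {t : ℝ}

lemma spd_congr (hU : IsOpen U) (hp : (x, t) ∈ U)
    (h : ∀ y s, (y, s) ∈ U → u y s = v y s) (i : Fin n) : spd i u x t = spd i v x t := by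
  have hslice : {y | (y, t) ∈ U} ∈ nhds x :=
    (hU.preimage (by fun_prop)).mem_nhds hp
  simp only [spd, (Filter.eventuallyEq_of_mem hslice fun y hy => h y t hy).fderiv_eq]

lemma tpd_congr (hU : IsOpen U) (hp : (x, t) ∈ U)
    (h : ∀ y s, (y, s) ∈ U → u y s = v y s) : tpd u x t = tpd v x t := by
  have hslice : {s | (x, s) ∈ U} ∈ nhds t :=
    (hU.preimage (by fun_prop)).mem_nhds hp
  simp only [tpd, (Filter.eventuallyEq_of_mem hslice fun s hs => h x s hs).deriv_eq]

def SmoothOn (U : Set ((Fin n → ℝ) × ℝ)) (u : Fld n) : Prop :=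
  ContDiffOn ℝ (⊤ : ℕ∞) (Function.uncurry u) U

lemma SmoothOn.const (c : ℝ) : SmoothOn U (fun _ _ => c) :=
  contDiffOn_const

lemma SmoothOn.add (hu : SmoothOn U u) (hv : SmoothOn U v) :
    SmoothOn U (fun x t => u x t + v x t) :=
  ContDiffOn.add hu hv

lemma SmoothOn.sub (hu : SmoothOn U u) (hv : SmoothOn U v) :
    SmoothOn U (fun x t => u x t - v x t) :=
  ContDiffOn.sub hu hv

lemma SmoothOn.mul (hu : SmoothOn U u) (hv : SmoothOn U v) :
    SmoothOn U (fun x t => u x t * v x t) :=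
  ContDiffOn.mul hu hv

lemma SmoothOn.inv (hu : SmoothOn U u) (h : ∀ p ∈ U, u p.1 p.2 ≠ 0) :
    SmoothOn U (fun x t => (u x t)⁻¹) :=
  ContDiffOn.inv hu h

lemma SmoothOn.sum {ι : Type*} {s : Finset ι} {f : ι → Fld n}
    (h : ∀ i ∈ s, SmoothOn U (f i)) : SmoothOn U (fun x t => ∑ i ∈ s, f i x t) :=
  ContDiffOn.sum h

lemma SmoothOn.prod {ι : Type*} {s : Finset ι} {f : ι → Fld n}
    (h : ∀ i ∈ s, SmoothOn U (f i)) : SmoothOn U (fun x t => ∏ i ∈ s, f i x t) :=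
  contDiffOn_prod h

lemma SmoothOn.congr (hu : SmoothOn U u) (h : ∀ y s, (y, s) ∈ U → v y s = u y s) :
    SmoothOn U v :=
  ContDiffOn.congr hu fun p hp => h p.1 p.2 hp

lemma SmoothOn.det {A : Met n} (hA : ∀ i j, SmoothOn U (A i j)) :
    SmoothOn U (fun x t => (matrixAt A x t).det) := by
  simp only [Matrix.det_apply, Units.smul_def, zsmul_eq_mul]
  exact SmoothOn.sum fun σ _ => (SmoothOn.const _).mul (SmoothOn.prod fun i _ => hA _ _)

lemma SmoothOn.adjugate {A : Met n} (hA : ∀ i j, SmoothOn U (A i j)) (a b : Fin n) :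
    SmoothOn U (fun x t => (matrixAt A x t).adjugate a b) := by
  have hrow : ∀ i j,
      SmoothOn U (fun x t => (matrixAt A x t).updateRow b (Pi.single a 1) i j) := by
    intro i j
    by_cases hi : i = b
    · subst hi; simpa using SmoothOn.const _
    · simpa [hi, matrixAt] using hA i j
  simp only [Matrix.adjugate_apply]
  exact SmoothOn.det hrow

section Point

variable (hU : IsOpen U) (hp : (x, t) ∈ U)
include hU hp

lemma SmoothOn.differentiableAt (hu : SmoothOn U u) :
    DifferentiableAt ℝ (Function.uncurry u) (x, t) :=
  (hu.contDiffAt (hU.mem_nhds hp)).differentiableAt (by simp)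

lemma SmoothOn.differentiableAt_space (hu : SmoothOn U u) :
    DifferentiableAt ℝ (fun y => u y t) x :=
  (hu.differentiableAt hU hp).comp (f := fun y => (y, t)) x (by fun_prop)

lemma SmoothOn.differentiableAt_time (hu : SmoothOn U u) :
    DifferentiableAt ℝ (fun s => u x s) t :=
  (hu.differentiableAt hU hp).comp (f := fun s => (x, s)) t (by fun_prop)

lemma spd_eq_fderiv (hu : SmoothOn U u) (i : Fin n) :
    spd i u x t = fderiv ℝ (Function.uncurry u) (x, t) (Pi.single i 1, 0) := by
  rw [spd, show (fun y => u y t) = Function.uncurry u ∘ (fun y => (y, t)) from rfl,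
    fderiv_comp x (hu.differentiableAt hU hp) (by fun_prop),
    DifferentiableAt.fderiv_prodMk (by fun_prop) (by fun_prop)]
  simp

lemma tpd_eq_fderiv (hu : SmoothOn U u) :
    tpd u x t = fderiv ℝ (Function.uncurry u) (x, t) (0, 1) := by
  rw [tpd, ← fderiv_apply_one_eq_deriv,
    show (fun s => u x s) = Function.uncurry u ∘ (fun s => (x, s)) from rfl,
    fderiv_comp t (hu.differentiableAt hU hp) (by fun_prop),
    DifferentiableAt.fderiv_prodMk (by fun_prop) (by fun_prop)]
  simp

end Point

def dirDeriv (u : Fld n) (w : (Fin n → ℝ) × ℝ) : Fld n :=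
  fun x t => fderiv ℝ (Function.uncurry u) (x, t) w

lemma SmoothOn.dirDeriv (hU : IsOpen U) (hu : SmoothOn U u) (w : (Fin n → ℝ) × ℝ) :
    SmoothOn U (dirDeriv u w) :=
  (hu.fderiv_of_isOpen hU le_rfl).clm_apply contDiffOn_const

lemma SmoothOn.spd (hU : IsOpen U) (hu : SmoothOn U u) (i : Fin n) : SmoothOn U (spd i u) :=
  (hu.dirDeriv hU _).congr fun _ _ hp => spd_eq_fderiv hU hp hu i

lemma dirDeriv_dirDeriv (hU : IsOpen U) (hp : (x, t) ∈ U) (hu : SmoothOn U u)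
    (v w : (Fin n → ℝ) × ℝ) :
    dirDeriv (dirDeriv u v) w x t
      = fderiv ℝ (fderiv ℝ (Function.uncurry u)) (x, t) w v := by
  have hD : ContDiffOn ℝ (⊤ : ℕ∞) (fderiv ℝ (Function.uncurry u)) U :=
    hu.fderiv_of_isOpen hU le_rfl
  replace hD := (hD.contDiffAt (hU.mem_nhds hp)).differentiableAt (by simp)
  change fderiv ℝ (fun p => fderiv ℝ (Function.uncurry u) p v) (x, t) w = _
  simp [fderiv_clm_apply hD (differentiableAt_const v)]

lemma tpd_spd_comm (hU : IsOpen U) (hp : (x, t) ∈ U) (hu : SmoothOn U u) (i : Fin n) :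
    tpd (spd i u) x t = spd i (tpd u) x t := by
  have hsymm := (hu.contDiffAt (hU.mem_nhds hp)).isSymmSndFDerivAt
    (by rw [minSmoothness_of_isRCLikeNormedField]; exact WithTop.coe_le_coe.2 le_top)
  rw [tpd_congr (v := dirDeriv u _) hU hp fun _ _ hq => spd_eq_fderiv hU hq hu i,
    spd_congr (v := dirDeriv u _) hU hp fun _ _ hq => tpd_eq_fderiv hU hq hu,
    tpd_eq_fderiv hU hp (hu.dirDeriv hU _), spd_eq_fderiv hU hp (hu.dirDeriv hU _)]
  exact (dirDeriv_dirDeriv hU hp hu _ _).trans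
    ((hsymm _ _).trans (dirDeriv_dirDeriv hU hp hu _ _).symm)

end Smooth

def spaceTime (Ωs : Set (Fin n → ℝ)) (T : ℝ) : Set ((Fin n → ℝ) × ℝ) :=
  Ωs ×ˢ Set.Ioo 0 T

namespace RicciFlow

variable {Ωs : Set (Fin n → ℝ)} {T : ℝ} {g ginv : Met n} (hg : RicciFlow Ωs T g ginv)
include hg

lemma isOpen_spaceTime : IsOpen (spaceTime Ωs T) :=
  hg.1.prod isOpen_Ioo

section Point

variable {x : Fin n → ℝ} {t : ℝ} (hp : (x, t) ∈ spaceTime Ωs T)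
include hp

lemma g_symm (i j : Fin n) : g i j x t = g j i x t :=
  (hg.2.2.2.2 x hp.1 t (Set.Ioo_subset_Ico_self hp.2)).1 i j

lemma g_mul_ginv (i j : Fin n) :
    ∑ k, g i k x t * ginv k j x t = if i = j then (1 : ℝ) else 0 :=
  (hg.2.2.2.2 x hp.1 t (Set.Ioo_subset_Ico_self hp.2)).2.2.1 i j

lemma tpd_g (i j : Fin n) : tpd (g i j) x t = -2 * Ric g ginv i j x t :=
  (hg.2.2.2.2 x hp.1 t (Set.Ioo_subset_Ico_self hp.2)).2.2.2 i j

lemma matrixAt_mul : matrixAt g x t * matrixAt ginv x t = 1 := by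
  ext i j
  simpa [Matrix.mul_apply, matrixAt, Matrix.one_apply] using hg.g_mul_ginv hp i j

lemma matrixAt_inv : (matrixAt g x t)⁻¹ = matrixAt ginv x t :=
  Matrix.inv_eq_right_inv (hg.matrixAt_mul hp)

lemma ginv_symm (i j : Fin n) : ginv i j x t = ginv j i x t := by
  have hgT : (matrixAt g x t).transpose = matrixAt g x t := by
    ext a b
    exact hg.g_symm hp b a
  have := congrFun₂ (Matrix.transpose_nonsing_inv (matrixAt g x t)) j i
  rwa [hgT, hg.matrixAt_inv hp] at this

lemma ginv_eq_adjugate (a b : Fin n) :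
    ginv a b x t = (matrixAt g x t).det⁻¹ * (matrixAt g x t).adjugate a b := by
  rw [← Ring.inverse_eq_inv', ← smul_eq_mul, ← Matrix.smul_apply, ← Matrix.inv_def,
    hg.matrixAt_inv hp]
  rfl

lemma det_ne_zero : (matrixAt g x t).det ≠ 0 := by
  have := congrArg Matrix.det (hg.matrixAt_mul hp)
  rw [Matrix.det_mul, Matrix.det_one] at this
  exact left_ne_zero_of_mul_eq_one this

end Point

lemma smoothOn_g (i j : Fin n) : SmoothOn (spaceTime Ωs T) (g i j) :=
  (hg.2.2.2.1 i j).mono (Set.prod_mono le_rfl Set.Ioo_subset_Ico_self)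

lemma smoothOn_ginv (a b : Fin n) : SmoothOn (spaceTime Ωs T) (ginv a b) :=
  (((SmoothOn.det hg.smoothOn_g).inv fun _ hp => hg.det_ne_zero hp).mul
    (SmoothOn.adjugate hg.smoothOn_g a b)).congr fun _ _ hp => hg.ginv_eq_adjugate hp a b

lemma smoothOn_Gamma (k i j : Fin n) : SmoothOn (spaceTime Ωs T) (Gamma g ginv k i j) := by
  have hU := hg.isOpen_spaceTime
  refine (SmoothOn.const _).mul (SmoothOn.sum fun l _ => (hg.smoothOn_ginv k l).mul ?_)
  exact (((hg.smoothOn_g j l).spd hU i).add ((hg.smoothOn_g i l).spd hU j)).sub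
    ((hg.smoothOn_g i j).spd hU l)

lemma smoothOn_Riem (l i j k : Fin n) : SmoothOn (spaceTime Ωs T) (Riem g ginv l i j k) := by
  have hU := hg.isOpen_spaceTime
  refine (((hg.smoothOn_Gamma l j k).spd hU i).sub ((hg.smoothOn_Gamma l i k).spd hU j)).add
    (SmoothOn.sum fun m _ => ?_)
  exact ((hg.smoothOn_Gamma m j k).mul (hg.smoothOn_Gamma l i m)).sub
    ((hg.smoothOn_Gamma m i k).mul (hg.smoothOn_Gamma l j m))

lemma smoothOn_Ric (j k : Fin n) : SmoothOn (spaceTime Ωs T) (Ric g ginv j k) :=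
  SmoothOn.sum fun p _ => hg.smoothOn_Riem p p j k

lemma smoothOn_Scal : SmoothOn (spaceTime Ωs T) (Scal g ginv) :=
  SmoothOn.sum fun j _ => SmoothOn.sum fun k _ => (hg.smoothOn_ginv j k).mul (hg.smoothOn_Ric j k)

section Point

variable {x : Fin n → ℝ} {t : ℝ} (hp : (x, t) ∈ spaceTime Ωs T)
include hp

lemma spd_g_symm (a i j : Fin n) : spd a (g i j) x t = spd a (g j i) x t :=
  spd_congr hg.isOpen_spaceTime hp (fun _ _ hq => hg.g_symm hq i j) a

lemma Gamma_symm (k i j : Fin n) : Gamma g ginv k i j x t = Gamma g ginv k j i x t := by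
  simp only [Gamma, hg.spd_g_symm hp _ i j, add_comm (spd i _ x t)]

lemma Ric_symm (i j : Fin n) : Ric g ginv i j x t = Ric g ginv j i x t := by
  have := tpd_congr hg.isOpen_spaceTime hp fun _ _ hq => hg.g_symm hq i j
  rw [hg.tpd_g hp, hg.tpd_g hp] at this
  linarith

lemma deriv_ginv_of_leibniz {dg dginv : Fin n → Fin n → ℝ}
    (h : ∀ i j, ∑ k, (dg i k * ginv k j x t + g i k x t * dginv k j) = 0) (a b : Fin n) :
    dginv a b = -∑ m, ∑ k, ginv a m x t * dg m k * ginv k b x t := by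
  have hmat := eq_neg_mul_mul_of_mul_add_mul_eq_zero (dG := Matrix.of dg) (dH := Matrix.of dginv)
    (mul_eq_one_comm.1 (hg.matrixAt_mul hp)) (by
      ext i j
      simpa [Matrix.mul_apply, matrixAt, Finset.sum_add_distrib] using h i j)
  rw [← Matrix.of_apply dginv a b, hmat, Finset.sum_comm]
  simp [Matrix.mul_apply, matrixAt, Finset.sum_mul]

lemma spd_ginv (c a b : Fin n) :
    spd c (ginv a b) x t = -∑ m, ∑ k, ginv a m x t * spd c (g m k) x t * ginv k b x t := by
  have hU := hg.isOpen_spaceTime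
  refine hg.deriv_ginv_of_leibniz hp (dg := fun i k => spd c (g i k) x t)
    (dginv := fun k j => spd c (ginv k j) x t) (fun i j => ?_) a b
  have hconst := spd_congr (v := fun _ _ => if i = j then (1 : ℝ) else 0) hU hp
    (fun _ _ hq => hg.g_mul_ginv hq i j) c
  rwa [spd_const, spd_sum c fun k _ =>
      ((hg.smoothOn_g i k).mul (hg.smoothOn_ginv k j)).differentiableAt_space hU hp,
    Finset.sum_congr rfl fun k _ => spd_mul c ((hg.smoothOn_g i k).differentiableAt_space hU hp)
      ((hg.smoothOn_ginv k j).differentiableAt_space hU hp)] at hconst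

lemma tpd_ginv (a b : Fin n) :
    tpd (ginv a b) x t = 2 * ∑ m, ∑ k, ginv a m x t * Ric g ginv m k x t * ginv k b x t := by
  have hU := hg.isOpen_spaceTime
  rw [hg.deriv_ginv_of_leibniz hp (dg := fun i k => tpd (g i k) x t)
    (dginv := fun k j => tpd (ginv k j) x t) (fun i j => ?_) a b]
  · simp only [hg.tpd_g hp, Finset.mul_sum, ← Finset.sum_neg_distrib]
    exact Finset.sum_congr rfl fun _ _ => Finset.sum_congr rfl fun _ _ => by ring
  have hconst := tpd_congr (v := fun _ _ => if i = j then (1 : ℝ) else 0) hU hp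
    (fun _ _ hq => hg.g_mul_ginv hq i j)
  rwa [tpd_const, tpd_sum fun k _ =>
      ((hg.smoothOn_g i k).mul (hg.smoothOn_ginv k j)).differentiableAt_time hU hp,
    Finset.sum_congr rfl fun k _ => tpd_mul ((hg.smoothOn_g i k).differentiableAt_time hU hp)
      ((hg.smoothOn_ginv k j).differentiableAt_time hU hp)] at hconst

lemma spd_ginv_eq_Gamma (a l m : Fin n) :
    spd a (ginv l m) x t
      = -∑ p, (Gamma g ginv l a p x t * ginv p m x t
          + Gamma g ginv m a p x t * ginv p l x t) := by
  rw [hg.spd_ginv hp, neg_inj, Finset.sum_add_distrib]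
  simp only [Gamma, Finset.mul_sum, Finset.sum_mul]
  rw [Finset.sum_comm (γ := Fin n) (f := fun p q => 1 / 2 * (ginv l q x t * _) * _),
    ← Finset.sum_add_distrib]
  refine Finset.sum_congr rfl fun q _ => ?_
  rw [← Finset.sum_add_distrib]
  refine Finset.sum_congr rfl fun p _ => ?_
  rw [hg.spd_g_symm hp a p q, hg.ginv_symm hp m p, hg.ginv_symm hp q l]
  ring

lemma cd11_raise (A : Fin n → Fin n → Fld n) (hA : ∀ j m, SmoothOn (spaceTime Ωs T) (A j m))
    (a l j : Fin n) :
    cd11 g ginv a (fun l j x t => ∑ m, ginv l m x t * A j m x t) l j x t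
      = ∑ m, ginv l m x t * cd2 g ginv a A j m x t := by
  have hU := hg.isOpen_spaceTime
  simp only [cd11, cd2]
  rw [spd_sum a fun m _ => ((hg.smoothOn_ginv l m).mul (hA j m)).differentiableAt_space hU hp,
    Finset.sum_congr rfl fun m _ => spd_mul a ((hg.smoothOn_ginv l m).differentiableAt_space hU hp)
      ((hA j m).differentiableAt_space hU hp)]
  simp only [hg.spd_ginv_eq_Gamma hp, Finset.sum_add_distrib, neg_mul, Finset.sum_neg_distrib,
    add_mul, Finset.sum_mul, mul_sub, Finset.sum_sub_distrib, Finset.mul_sum]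
  have h₁ : ∑ m, ∑ p, Gamma g ginv l a p x t * ginv p m x t * A j m x t
      = ∑ p, ∑ m, Gamma g ginv l a p x t * (ginv p m x t * A j m x t) := by
    rw [Finset.sum_comm]
    exact Finset.sum_congr rfl fun _ _ => Finset.sum_congr rfl fun _ _ => by ring
  have h₂ : ∑ m, ∑ p, Gamma g ginv m a p x t * ginv p l x t * A j m x t
      = ∑ p, ∑ m, ginv l p x t * (Gamma g ginv m a p x t * A j m x t) := by
    rw [Finset.sum_comm]
    exact Finset.sum_congr rfl fun p _ => Finset.sum_congr rfl fun _ _ => by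
      rw [hg.ginv_symm hp p l]; ring
  have h₃ : ∑ p, ∑ m, Gamma g ginv p a j x t * (ginv l m x t * A p m x t)
      = ∑ m, ∑ p, ginv l m x t * (Gamma g ginv p a j x t * A p m x t) := by
    rw [Finset.sum_comm]
    exact Finset.sum_congr rfl fun _ _ => Finset.sum_congr rfl fun _ _ => by ring
  linarith

lemma tpd_spd_g (a b c : Fin n) : tpd (spd a (g b c)) x t = -2 * spd a (Ric g ginv b c) x t := by
  have hU := hg.isOpen_spaceTime
  rw [tpd_spd_comm hU hp (hg.smoothOn_g b c),
    spd_congr (v := fun x t => -2 * Ric g ginv b c x t) hU hp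
      (fun _ _ hq => hg.tpd_g hq b c) a, spd_const_mul]

lemma cd2_Ric_add_cd2_Ric_sub_cd2_Ric (j k m : Fin n) :
    cd2 g ginv j (Ric g ginv) k m x t + cd2 g ginv k (Ric g ginv) j m x t
        - cd2 g ginv m (Ric g ginv) j k x t
      = spd j (Ric g ginv k m) x t + spd k (Ric g ginv j m) x t - spd m (Ric g ginv j k) x t
        - 2 * ∑ p, Gamma g ginv p j k x t * Ric g ginv p m x t := by
  have e₁ : ∑ p, Gamma g ginv p k j x t * Ric g ginv p m x t
      = ∑ p, Gamma g ginv p j k x t * Ric g ginv p m x t :=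
    Finset.sum_congr rfl fun p _ => by rw [hg.Gamma_symm hp p k j]
  have e₂ : ∑ p, Gamma g ginv p m j x t * Ric g ginv p k x t
      = ∑ p, Gamma g ginv p j m x t * Ric g ginv k p x t :=
    Finset.sum_congr rfl fun p _ => by rw [hg.Gamma_symm hp p m j, hg.Ric_symm hp p k]
  have e₃ : ∑ p, Gamma g ginv p m k x t * Ric g ginv j p x t
      = ∑ p, Gamma g ginv p k m x t * Ric g ginv j p x t :=
    Finset.sum_congr rfl fun p _ => by rw [hg.Gamma_symm hp p m k]
  simp only [cd2]
  rw [e₁, e₂, e₃]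
  ring

lemma sum_tpd_ginv_mul_bracket (l j k : Fin n) :
    ∑ m, tpd (ginv l m) x t * (spd j (g k m) x t + spd k (g j m) x t - spd m (g j k) x t)
      = 4 * ∑ a, ginv l a x t * ∑ c, Gamma g ginv c j k x t * Ric g ginv c a x t := by
  set B : Fin n → ℝ := fun m => spd j (g k m) x t + spd k (g j m) x t - spd m (g j k) x t
  calc ∑ m, tpd (ginv l m) x t * B m
      = ∑ m, ∑ a, ∑ c, 2 * (ginv l a x t * Ric g ginv a c x t) * (ginv c m x t * B m) := by
        simp only [hg.tpd_ginv hp, Finset.mul_sum, Finset.sum_mul]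
        exact Finset.sum_congr rfl fun _ _ => Finset.sum_congr rfl fun _ _ =>
          Finset.sum_congr rfl fun _ _ => by ring
    _ = ∑ a, ∑ c, 2 * (ginv l a x t * Ric g ginv a c x t) * ∑ m, ginv c m x t * B m := by
        rw [Finset.sum_comm]
        refine Finset.sum_congr rfl fun a _ => ?_
        rw [Finset.sum_comm]
        simp only [Finset.mul_sum]
    _ = 4 * ∑ a, ginv l a x t * ∑ c, Gamma g ginv c j k x t * Ric g ginv c a x t := by
        have hΓ : ∀ c, ∑ m, ginv c m x t * B m = 2 * Gamma g ginv c j k x t := fun c => by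
          simp only [Gamma, B]
          ring
        simp only [hΓ, Finset.mul_sum]
        refine Finset.sum_congr rfl fun a _ => Finset.sum_congr rfl fun c _ => ?_
        rw [hg.Ric_symm hp c a]
        ring

lemma tpd_Gamma (l j k : Fin n) :
    tpd (Gamma g ginv l j k) x t
      = -∑ m, ginv l m x t * (cd2 g ginv j (Ric g ginv) k m x t
          + cd2 g ginv k (Ric g ginv) j m x t - cd2 g ginv m (Ric g ginv) j k x t) := by
  have hU := hg.isOpen_spaceTime
  have hB : ∀ m, SmoothOn (spaceTime Ωs T)
      (fun x t => spd j (g k m) x t + spd k (g j m) x t - spd m (g j k) x t) := fun m =>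
    (((hg.smoothOn_g k m).spd hU j).add ((hg.smoothOn_g j m).spd hU k)).sub
      ((hg.smoothOn_g j k).spd hU m)
  unfold Gamma
  rw [tpd_const_mul, tpd_sum fun m _ =>
      ((hg.smoothOn_ginv l m).mul (hB m)).differentiableAt_time hU hp,
    Finset.sum_congr rfl fun m _ => tpd_mul ((hg.smoothOn_ginv l m).differentiableAt_time hU hp)
      ((hB m).differentiableAt_time hU hp),
    Finset.sum_add_distrib, hg.sum_tpd_ginv_mul_bracket hp]
  have htB : ∀ m, tpd (fun x t => spd j (g k m) x t + spd k (g j m) x t - spd m (g j k) x t) x t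
      = -2 * (spd j (Ric g ginv k m) x t + spd k (Ric g ginv j m) x t
        - spd m (Ric g ginv j k) x t) := fun m => by
    have hgt : ∀ a b c, DifferentiableAt ℝ (fun s => spd a (g b c) x s) t :=
      fun a b c => ((hg.smoothOn_g b c).spd hU a).differentiableAt_time hU hp
    rw [tpd_sub (u := fun x t => _ + _) ((hgt j k m).add (hgt k j m)) (hgt m j k),
      tpd_add (hgt j k m) (hgt k j m), hg.tpd_spd_g hp, hg.tpd_spd_g hp, hg.tpd_spd_g hp]
    ring
  simp only [htB, hg.cd2_Ric_add_cd2_Ric_sub_cd2_Ric hp]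
  rw [Finset.mul_sum _ _ 4, ← Finset.sum_add_distrib, Finset.mul_sum, ← Finset.sum_neg_distrib]
  exact Finset.sum_congr rfl fun _ _ => by ring

lemma cd11_RicUp (a l j : Fin n) :
    cd11 g ginv a (RicUp g ginv) l j x t
      = ∑ m, ginv l m x t * cd2 g ginv a (Ric g ginv) j m x t :=
  hg.cd11_raise hp (Ric g ginv) hg.smoothOn_Ric a l j

lemma tpd_Gamma_eq_cd11 (l j k : Fin n) :
    tpd (Gamma g ginv l j k) x t
      = -cd11 g ginv j (RicUp g ginv) l k x t - cd11 g ginv k (RicUp g ginv) l j x t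
        + ∑ m, ginv l m x t * cd2 g ginv m (Ric g ginv) j k x t := by
  rw [hg.tpd_Gamma hp, hg.cd11_RicUp hp, hg.cd11_RicUp hp]
  simp only [mul_add, mul_sub, Finset.sum_add_distrib, Finset.sum_sub_distrib]
  ring

end Point

end RicciFlow


section SpaceTimeMetric

variable {g ginv : Met n} {ε δ : ℝ}

@[simp] lemma spdT_zero (u : Fld n) : spdT 0 u = tpd u := rfl

@[simp] lemma spdT_succ (i : Fin n) (u : Fld n) : spdT i.succ u = spd i u := rfl

lemma GammaE_succ_succ_succ (l i j : Fin n) :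
    GammaE g ginv ε δ l.succ i.succ j.succ = Gamma g ginv l i j := by
  funext x t
  simp [GammaE, Gamma, gE, gEinv, Fin.sum_univ_succ, spd_const]

lemma GammaE_succ_zero_zero (l : Fin n) :
    GammaE g ginv ε δ l.succ 0 0 = fun x t => -((1/2) * gradScal g ginv l x t) := by
  funext x t
  simp [GammaE, gradScal, gE, gEinv, Fin.sum_univ_succ, tpd_const, spd_add_fun_time]

lemma GammaE_zero_zero_succ (j : Fin n) (x : Fin n → ℝ) (t : ℝ) :
    GammaE g ginv ε δ 0 0 j.succ x t
      = (1/2) * (spd j (Scal g ginv) x t / (Scal g ginv x t + ε / (2 * (t + δ)))) := by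
  simp [GammaE, gE, gEinv, Fin.sum_univ_succ, tpd_const, spd_add_fun_time]
  ring

lemma GammaE_zero_succ_zero (j : Fin n) (x : Fin n → ℝ) (t : ℝ) :
    GammaE g ginv ε δ 0 j.succ 0 x t
      = (1/2) * (spd j (Scal g ginv) x t / (Scal g ginv x t + ε / (2 * (t + δ)))) := by
  simp [GammaE, gE, gEinv, Fin.sum_univ_succ, tpd_const, spd_add_fun_time]
  ring

section Flow

variable {Ωs : Set (Fin n → ℝ)} {T : ℝ} (hg : RicciFlow Ωs T g ginv)
  {x : Fin n → ℝ} {t : ℝ} (hp : (x, t) ∈ spaceTime Ωs T)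
include hg hp

lemma GammaE_succ_zero_succ (l j : Fin n) :
    GammaE g ginv ε δ l.succ 0 j.succ x t = -RicUp g ginv l j x t := by
  simp [GammaE, RicUp, gE, gEinv, Fin.sum_univ_succ, spd_const, hg.tpd_g hp, Finset.mul_sum]
  exact Finset.sum_congr rfl fun _ _ => by ring

lemma GammaE_succ_succ_zero (l j : Fin n) :
    GammaE g ginv ε δ l.succ j.succ 0 x t = -RicUp g ginv l j x t := by
  simp [GammaE, RicUp, gE, gEinv, Fin.sum_univ_succ, spd_const, hg.tpd_g hp, Finset.mul_sum]
  exact Finset.sum_congr rfl fun _ _ => by ring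

lemma GammaE_zero_succ_succ (j k : Fin n) :
    GammaE g ginv ε δ 0 j.succ k.succ x t
      = Ric g ginv j k x t / (Scal g ginv x t + ε / (2 * (t + δ))) := by
  simp [GammaE, gE, gEinv, Fin.sum_univ_succ, spd_const, hg.tpd_g hp]
  ring

lemma GammaE_zero_zero_zero (htδ : t + δ ≠ 0) :
    GammaE g ginv ε δ 0 0 0 x t
      = (1/2) * ((tpd (Scal g ginv) x t - ε / (2 * (t + δ) ^ 2))
          / (Scal g ginv x t + ε / (2 * (t + δ)))) := by
  have htpd : tpd (fun x t => Scal g ginv x t + ε / (2 * (t + δ))) x t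
      = tpd (Scal g ginv) x t - ε / (2 * (t + δ) ^ 2) := by
    rw [tpd_add (hg.smoothOn_Scal.differentiableAt_time hg.isOpen_spaceTime hp)
      (hasDerivAt_div_two_mul_add ε htδ).differentiableAt, sub_eq_add_neg]
    exact congrArg _ (hasDerivAt_div_two_mul_add ε htδ).deriv
  simp [GammaE, gE, gEinv, Fin.sum_univ_succ, htpd]
  ring

lemma RiemT_GammaE_succ_succ_succ_succ (i j k l : Fin n) :
    RiemT (GammaE g ginv ε δ) l.succ i.succ j.succ k.succ x t
      = Riem g ginv l i j k x t
        - (RicUp g ginv l i x t * Ric g ginv j k x t - RicUp g ginv l j x t * Ric g ginv i k x t)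
          / (Scal g ginv x t + ε / (2 * (t + δ))) := by
  simp only [RiemT, spdT_succ, Fin.sum_univ_succ, GammaE_succ_succ_succ,
    GammaE_zero_succ_succ hg hp, GammaE_succ_succ_zero hg hp, Riem]
  ring

lemma RiemT_GammaE_succ_zero_succ_succ (j k l : Fin n) :
    RiemT (GammaE g ginv ε δ) l.succ 0 j.succ k.succ x t
      = -cd11 g ginv k (RicUp g ginv) l j x t
        + (∑ m, ginv l m x t * cd2 g ginv m (Ric g ginv) j k x t)
        - (1/2) * (Ric g ginv j k x t * gradScal g ginv l x t
            - RicUp g ginv l j x t * spd k (Scal g ginv) x t)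
          / (Scal g ginv x t + ε / (2 * (t + δ))) := by
  have hspd : spd j (GammaE g ginv ε δ l.succ 0 k.succ) x t = -spd j (RicUp g ginv l k) x t := by
    rw [spd_congr (v := fun x t => -RicUp g ginv l k x t) hg.isOpen_spaceTime hp
      (fun _ _ hq => GammaE_succ_zero_succ hg hq l k) j, spd_neg]
  simp only [RiemT, spdT_succ, spdT_zero, Fin.sum_univ_succ, hspd, GammaE_succ_succ_succ,
    hg.tpd_Gamma_eq_cd11 hp, GammaE_succ_zero_succ hg hp, GammaE_succ_succ_zero hg hp,
    GammaE_zero_succ_succ hg hp, GammaE_zero_zero_succ, GammaE_succ_zero_zero]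
  have hquad : ∑ m, (Gamma g ginv m j k x t * -RicUp g ginv l m x t
      - -RicUp g ginv m k x t * Gamma g ginv l j m x t)
      = ∑ p, Gamma g ginv l j p x t * RicUp g ginv p k x t
        - ∑ p, Gamma g ginv p j k x t * RicUp g ginv l p x t := by
    rw [← Finset.sum_sub_distrib]
    exact Finset.sum_congr rfl fun _ _ => by ring
  rw [hquad]
  simp only [cd11]
  ring

lemma RiemT_GammaE_succ_succ_zero_zero (htδ : t + δ ≠ 0) (i l : Fin n) :
    RiemT (GammaE g ginv ε δ) l.succ i.succ 0 0 x t
      = tpd (RicUp g ginv l i) x t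
        - (1/2) * cdVec g ginv i (gradScal g ginv) l x t
        - (∑ m, RicUp g ginv m i x t * RicUp g ginv l m x t)
        - (((1/2) * tpd (Scal g ginv) x t - ε / (4 * (t + δ)^2)) * RicUp g ginv l i x t
            - (1/4) * spd i (Scal g ginv) x t * gradScal g ginv l x t)
          / (Scal g ginv x t + ε / (2 * (t + δ))) := by
  have htpd : tpd (GammaE g ginv ε δ l.succ i.succ 0) x t = -tpd (RicUp g ginv l i) x t := by
    rw [tpd_congr (v := fun x t => -RicUp g ginv l i x t) hg.isOpen_spaceTime hp
      (fun _ _ hq => GammaE_succ_succ_zero hg hq l i), tpd_neg]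
  have hspd : spd i (GammaE g ginv ε δ l.succ 0 0) x t
      = -((1/2) * spd i (gradScal g ginv l) x t) := by
    rw [GammaE_succ_zero_zero, spd_neg, spd_const_mul]
  simp only [RiemT, spdT_succ, spdT_zero, Fin.sum_univ_succ]
  rw [hspd, htpd]
  simp only [GammaE_succ_succ_succ, GammaE_succ_succ_zero hg hp, GammaE_succ_zero_succ hg hp,
    GammaE_zero_zero_zero hg hp htδ, GammaE_zero_succ_zero, GammaE_succ_zero_zero]
  have hquad : ∑ m, (-(1/2 * gradScal g ginv m x t) * Gamma g ginv l i m x t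
      - -RicUp g ginv m i x t * -RicUp g ginv l m x t)
      = -((1/2) * ∑ p, Gamma g ginv l i p x t * gradScal g ginv p x t)
        - ∑ m, RicUp g ginv m i x t * RicUp g ginv l m x t := by
    rw [Finset.mul_sum, ← Finset.sum_neg_distrib, ← Finset.sum_sub_distrib]
    exact Finset.sum_congr rfl fun _ _ => by ring
  rw [hquad]
  simp only [cdVec]
  -- otherwise `ring` expands `t + δ` inside the inverses and cannot match them
  generalize t + δ = s
  ring

end Flow

end SpaceTimeMetric

end CC

theorem approx_curvature_general (n : ℕ)
    (Ωs : Set (Fin n → ℝ)) (T : ℝ)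
    (g ginv : CC.Met n) (hg : CC.RicciFlow Ωs T g ginv)
    (ε δ : ℝ) (hδ : 0 < δ) :
    ∀ x ∈ Ωs, ∀ t ∈ Set.Ioo (0:ℝ) T,
      0 < CC.Scal g ginv x t + ε / (2 * (t + δ)) →
      -- (1)
      (∀ i j k l : Fin n,
        CC.RiemT (CC.GammaE g ginv ε δ) l.succ i.succ j.succ k.succ x t =
          CC.Riem g ginv l i j k x t
          - (CC.RicUp g ginv l i x t * CC.Ric g ginv j k x t
             - CC.RicUp g ginv l j x t * CC.Ric g ginv i k x t)
            / (CC.Scal g ginv x t + ε / (2 * (t + δ)))) ∧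
      -- (2)
      (∀ j k l : Fin n,
        CC.RiemT (CC.GammaE g ginv ε δ) l.succ 0 j.succ k.succ x t =
          - CC.cd11 g ginv k (CC.RicUp g ginv) l j x t
          + (∑ m, ginv l m x t * CC.cd2 g ginv m (CC.Ric g ginv) j k x t)
          - (1/2) * (CC.Ric g ginv j k x t * CC.gradScal g ginv l x t
              - CC.RicUp g ginv l j x t * CC.spd k (CC.Scal g ginv) x t)
            / (CC.Scal g ginv x t + ε / (2 * (t + δ)))) ∧
      -- (3)
      (∀ i l : Fin n,
        CC.RiemT (CC.GammaE g ginv ε δ) l.succ i.succ 0 0 x t =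
          CC.tpd (CC.RicUp g ginv l i) x t
          - (1/2) * CC.cdVec g ginv i (CC.gradScal g ginv) l x t
          - (∑ m, CC.RicUp g ginv m i x t * CC.RicUp g ginv l m x t)
          - (((1/2) * CC.tpd (CC.Scal g ginv) x t - ε / (4 * (t + δ)^2)) *
                CC.RicUp g ginv l i x t
             - (1/4) * CC.spd i (CC.Scal g ginv) x t * CC.gradScal g ginv l x t)
            / (CC.Scal g ginv x t + ε / (2 * (t + δ)))) := by
  intro x hx t ht _
  have hp : (x, t) ∈ CC.spaceTime Ωs T := ⟨hx, ht⟩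
  have htδ : t + δ ≠ 0 := (add_pos ht.1 hδ).ne'
  exact ⟨fun i j k l => CC.RiemT_GammaE_succ_succ_succ_succ hg hp i j k l,
    fun j k l => CC.RiemT_GammaE_succ_zero_succ_succ hg hp j k l,
    fun i l => CC.RiemT_GammaE_succ_succ_zero_zero hg hp htδ i l⟩

/-- Lemma 4.4 of Chow–Chu. Components of the curvature of the
space-time metric `g̃_{ε,δ}`, at points where `K = R + ε/(2(t+δ)) > 0`. -/
theorem approx_curvature (n : ℕ) (hn : 2 ≤ n)
    (Ωs : Set (Fin n → ℝ)) (T : ℝ)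
    (g ginv : CC.Met n) (hg : CC.RicciFlow Ωs T g ginv)
    (ε δ : ℝ) (hε : 0 < ε) (hδ : 0 < δ) :
    ∀ x ∈ Ωs, ∀ t ∈ Set.Ioo (0:ℝ) T,
      0 < CC.Scal g ginv x t + ε / (2 * (t + δ)) →
      -- (1)
      (∀ i j k l : Fin n,
        CC.RiemT (CC.GammaE g ginv ε δ) l.succ i.succ j.succ k.succ x t =
          CC.Riem g ginv l i j k x t
          - (CC.RicUp g ginv l i x t * CC.Ric g ginv j k x t
             - CC.RicUp g ginv l j x t * CC.Ric g ginv i k x t)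
            / (CC.Scal g ginv x t + ε / (2 * (t + δ)))) ∧
      -- (2)
      (∀ j k l : Fin n,
        CC.RiemT (CC.GammaE g ginv ε δ) l.succ 0 j.succ k.succ x t =
          - CC.cd11 g ginv k (CC.RicUp g ginv) l j x t
          + (∑ m, ginv l m x t * CC.cd2 g ginv m (CC.Ric g ginv) j k x t)
          - (1/2) * (CC.Ric g ginv j k x t * CC.gradScal g ginv l x t
              - CC.RicUp g ginv l j x t * CC.spd k (CC.Scal g ginv) x t)
            / (CC.Scal g ginv x t + ε / (2 * (t + δ)))) ∧
      -- (3)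
      (∀ i l : Fin n,
        CC.RiemT (CC.GammaE g ginv ε δ) l.succ i.succ 0 0 x t =
          CC.tpd (CC.RicUp g ginv l i) x t
          - (1/2) * CC.cdVec g ginv i (CC.gradScal g ginv) l x t
          - (∑ m, CC.RicUp g ginv m i x t * CC.RicUp g ginv l m x t)
          - (((1/2) * CC.tpd (CC.Scal g ginv) x t - ε / (4 * (t + δ)^2)) *
                CC.RicUp g ginv l i x t
             - (1/4) * CC.spd i (CC.Scal g ginv) x t * CC.gradScal g ginv l x t)
            / (CC.Scal g ginv x t + ε / (2 * (t + δ)))) :=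
  approx_curvature_general n Ωs T g ginv hg ε δ hδ
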